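/- arXiv:2506.23041 — 2 statements merged into one kernel-verified Lean document; each statement's English description precedes it below -/
import Mathlib

section
/- Let X be a random variable on a probability space taking values in a finite set 𝒳. Let F be an MoE MLP with M experts, i.e. F(x) = g(ζ(x), (φ_i(x))_{i∈S_{ζ(x)}}) for all x ∈ 𝒳, where ζ : 𝒳 → {1,…,M}, each S_z ⊆ {1,…,d} is the neuron index set of expert z, each φ_i : 𝒳 → 𝒜 takes values in a finite set 𝒜, and g is an arbitrary function. Write Z = ζ(X). Then I(F(X); X) ≤ I(Z; X) + Σ_{z=1}^{M} I((φ_i(X))_{i∈S_z}; X). -/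
open MeasureTheory

open Finset

/-- Shannon entropy (in bits) of a random variable `X` taking values in a finite set. -/
noncomputable def entropy {Ω 𝒳 : Type*} [MeasurableSpace Ω] [Fintype 𝒳]
    (μ : Measure Ω) (X : Ω → 𝒳) : ℝ :=
  -∑ x : 𝒳, ((μ (X ⁻¹' {x})).toReal * Real.logb 2 (μ (X ⁻¹' {x})).toReal)

/-- Mutual information (in bits): `I(X;Y) = H(X) + H(Y) - H(X,Y)`. -/
noncomputable def mutualInfo {Ω 𝒳 𝒴 : Type*} [MeasurableSpace Ω] [Fintype 𝒳] [Fintype 𝒴]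
    (μ : Measure Ω) (X : Ω → 𝒳) (Y : Ω → 𝒴) : ℝ :=
  entropy μ X + entropy μ Y - entropy μ (fun ω => (X ω, Y ω))

open Classical in
/-- Pushforward distribution of `p` along `f`. -/
noncomputable def qd {𝒳 𝒴 : Type*} [Fintype 𝒳] (p : 𝒳 → ℝ) (f : 𝒳 → 𝒴) (y : 𝒴) : ℝ :=
  ∑ x : 𝒳, if f x = y then p x else 0

/-- Entropy (natural log) of the pushforward of `p` along `f`. -/
noncomputable def HN {𝒳 𝒴 : Type*} [Fintype 𝒳] [Fintype 𝒴] (p : 𝒳 → ℝ) (f : 𝒳 → 𝒴) : ℝ :=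
  ∑ y : 𝒴, Real.negMulLog (qd p f y)

section Dist
variable {𝒳 𝒴 𝒵 : Type*} [Fintype 𝒳] [Fintype 𝒴] [Fintype 𝒵] {p : 𝒳 → ℝ}

lemma qd_nonneg (hp : ∀ x, 0 ≤ p x) (f : 𝒳 → 𝒴) (y : 𝒴) : 0 ≤ qd p f y := by
  classical
  unfold qd
  refine Finset.sum_nonneg fun x _ => ?_
  split_ifs <;> simp [hp x]

lemma sum_qd (f : 𝒳 → 𝒴) : ∑ y : 𝒴, qd p f y = ∑ x : 𝒳, p x := by
  classical
  unfold qd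
  rw [Finset.sum_comm]
  refine Finset.sum_congr rfl fun x _ => ?_
  simp

open Classical in
lemma qd_comp (f : 𝒳 → 𝒴) (h : 𝒴 → 𝒵) (u : 𝒵) :
    qd p (fun x => h (f x)) u = ∑ y : 𝒴, if h y = u then qd p f y else 0 := by
  classical
  have key : ∀ y : 𝒴, (if h y = u then qd p f y else 0)
      = ∑ x : 𝒳, if h y = u ∧ f x = y then p x else 0 := by
    intro y
    split_ifs with hy
    · unfold qd
      exact Finset.sum_congr rfl fun x _ => by simp [hy]
    · exact (Finset.sum_eq_zero fun x _ => by simp [hy]).symm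
  rw [Finset.sum_congr rfl fun y _ => key y, Finset.sum_comm]
  unfold qd
  refine Finset.sum_congr rfl fun x _ => ?_
  rw [Finset.sum_eq_single (f x)]
  · simp
  · intro y _ hy
    simp [Ne.symm hy]
  · simp

/-- Grouping: entropy cannot increase when summing nonnegative weights. -/
lemma negMulLog_sum_le {ι : Type*} (s : Finset ι) (w : ι → ℝ) (hw : ∀ i ∈ s, 0 ≤ w i) :
    Real.negMulLog (∑ i ∈ s, w i) ≤ ∑ i ∈ s, Real.negMulLog (w i) := by
  have hS : 0 ≤ ∑ i ∈ s, w i := Finset.sum_nonneg hw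
  have : Real.negMulLog (∑ i ∈ s, w i) = ∑ i ∈ s, (-(w i) * Real.log (∑ j ∈ s, w j)) := by
    rw [Real.negMulLog, ← Finset.sum_neg_distrib, Finset.sum_mul]
  rw [this]
  refine Finset.sum_le_sum fun i hi => ?_
  rcases eq_or_lt_of_le (hw i hi) with h0 | h0
  · simp [Real.negMulLog, ← h0]
  · have hle : w i ≤ ∑ j ∈ s, w j := Finset.single_le_sum hw hi
    have hlog : Real.log (w i) ≤ Real.log (∑ j ∈ s, w j) := Real.log_le_log h0 hle
    rw [Real.negMulLog]
    nlinarith [h0]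

lemma HN_comp_le (hp : ∀ x, 0 ≤ p x) (f : 𝒳 → 𝒴) (h : 𝒴 → 𝒵) :
    HN p (fun x => h (f x)) ≤ HN p f := by
  classical
  unfold HN
  have step1 : ∀ u : 𝒵, Real.negMulLog (qd p (fun x => h (f x)) u)
      ≤ ∑ y : 𝒴, (if h y = u then Real.negMulLog (qd p f y) else 0) := by
    intro u
    rw [qd_comp]
    refine le_trans (negMulLog_sum_le _ _ fun y _ => ?_) (le_of_eq ?_)
    · split_ifs
      · exact qd_nonneg hp f y
      · exact le_rfl
    · exact Finset.sum_congr rfl fun y _ => by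
        rw [apply_ite Real.negMulLog, Real.negMulLog_zero]
  calc ∑ u : 𝒵, Real.negMulLog (qd p (fun x => h (f x)) u)
      ≤ ∑ u : 𝒵, ∑ y : 𝒴, (if h y = u then Real.negMulLog (qd p f y) else 0) :=
        Finset.sum_le_sum fun u _ => step1 u
    _ = ∑ y : 𝒴, Real.negMulLog (qd p f y) := by
        rw [Finset.sum_comm]
        exact Finset.sum_congr rfl fun y _ => by simp

/-- Per-term Gibbs inequality. -/
lemma gibbs_term {a b c : ℝ} (ha : 0 ≤ a) (hb : 0 ≤ b) (hc : 0 ≤ c)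
    (hab : a ≤ b) (hac : a ≤ c) :
    a * (Real.log b + Real.log c - Real.log a) ≤ b * c - a := by
  rcases eq_or_lt_of_le ha with h0 | h0
  · rw [← h0]
    simpa using mul_nonneg hb hc
  · have hb' : 0 < b := lt_of_lt_of_le h0 hab
    have hc' : 0 < c := lt_of_lt_of_le h0 hac
    have h1 : Real.log (b * c / a) ≤ b * c / a - 1 :=
      Real.log_le_sub_one_of_pos (by positivity)
    have h2 : Real.log (b * c / a) = Real.log b + Real.log c - Real.log a := by
      rw [Real.log_div (by positivity) (ne_of_gt h0), Real.log_mul (ne_of_gt hb') (ne_of_gt hc')]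
    rw [← h2]
    have := mul_le_mul_of_nonneg_left h1 (le_of_lt h0)
    calc a * Real.log (b * c / a) ≤ a * (b * c / a - 1) := this
      _ = b * c - a := by field_simp

lemma qd_fst (f : 𝒳 → 𝒴) (g : 𝒳 → 𝒵) (y : 𝒴) :
    qd p f y = ∑ z : 𝒵, qd p (fun x => (f x, g x)) (y, z) := by
  classical
  unfold qd
  rw [Finset.sum_comm]
  refine Finset.sum_congr rfl fun x _ => ?_
  rcases eq_or_ne (f x) y with h | h
  · rw [Finset.sum_eq_single (g x)]
    · simp [h]
    · intro z _ hz
      simp [Prod.ext_iff, Ne.symm hz]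
    · simp
  · refine (if_neg h).trans (Finset.sum_eq_zero fun z _ => ?_).symm
    simp [Prod.ext_iff, h]

lemma qd_snd (f : 𝒳 → 𝒴) (g : 𝒳 → 𝒵) (z : 𝒵) :
    qd p g z = ∑ y : 𝒴, qd p (fun x => (f x, g x)) (y, z) := by
  classical
  unfold qd
  rw [Finset.sum_comm]
  refine Finset.sum_congr rfl fun x _ => ?_
  rcases eq_or_ne (g x) z with h | h
  · rw [Finset.sum_eq_single (f x)]
    · simp [h]
    · intro y _ hy
      simp [Prod.ext_iff, Ne.symm hy]
    · simp
  · refine (if_neg h).trans (Finset.sum_eq_zero fun y _ => ?_).symm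
    simp [Prod.ext_iff, h]

lemma qd_le_fst (hp : ∀ x, 0 ≤ p x) (f : 𝒳 → 𝒴) (g : 𝒳 → 𝒵) (w : 𝒴 × 𝒵) :
    qd p (fun x => (f x, g x)) w ≤ qd p f w.1 := by
  classical
  rw [qd_fst f g w.1]
  exact Finset.single_le_sum (fun z _ => qd_nonneg hp (fun x => (f x, g x)) (w.1, z)) (Finset.mem_univ w.2)

lemma qd_le_snd (hp : ∀ x, 0 ≤ p x) (f : 𝒳 → 𝒴) (g : 𝒳 → 𝒵) (w : 𝒴 × 𝒵) :
    qd p (fun x => (f x, g x)) w ≤ qd p g w.2 := by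
  classical
  rw [qd_snd f g w.2]
  exact Finset.single_le_sum (fun y _ => qd_nonneg hp (fun x => (f x, g x)) (y, w.2)) (Finset.mem_univ w.1)

/-- Subadditivity of entropy. -/
lemma HN_pair_le (hp : ∀ x, 0 ≤ p x) (hs : ∑ x : 𝒳, p x = 1)
    (f : 𝒳 → 𝒴) (g : 𝒳 → 𝒵) :
    HN p (fun x => (f x, g x)) ≤ HN p f + HN p g := by
  classical
  set a : 𝒴 × 𝒵 → ℝ := qd p (fun x => (f x, g x)) with ha
  have ha0 : ∀ w, 0 ≤ a w := fun w => qd_nonneg hp _ _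
  have hHf : HN p f = ∑ w : 𝒴 × 𝒵, (-(a w) * Real.log (qd p f w.1)) := by
    unfold HN
    rw [Fintype.sum_prod_type]
    refine Finset.sum_congr rfl fun y _ => ?_
    rw [Real.negMulLog, qd_fst f g y, ← Finset.sum_neg_distrib, Finset.sum_mul]
    refine Finset.sum_congr rfl fun z _ => ?_
    rw [← qd_fst f g y]
  have hHg : HN p g = ∑ w : 𝒴 × 𝒵, (-(a w) * Real.log (qd p g w.2)) := by
    unfold HN
    rw [Fintype.sum_prod_type, Finset.sum_comm]
    refine Finset.sum_congr rfl fun z _ => ?_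
    rw [Real.negMulLog, qd_snd f g z, ← Finset.sum_neg_distrib, Finset.sum_mul]
    refine Finset.sum_congr rfl fun y _ => ?_
    rw [← qd_snd f g z]
  have key : ∑ w : 𝒴 × 𝒵, a w * (Real.log (qd p f w.1) + Real.log (qd p g w.2) - Real.log (a w))
      ≤ ∑ w : 𝒴 × 𝒵, (qd p f w.1 * qd p g w.2 - a w) := by
    refine Finset.sum_le_sum fun w _ => ?_
    exact gibbs_term (ha0 w) (qd_nonneg hp f w.1) (qd_nonneg hp g w.2)
      (qd_le_fst hp f g w) (qd_le_snd hp f g w)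
  have hrhs : ∑ w : 𝒴 × 𝒵, (qd p f w.1 * qd p g w.2 - a w) = 0 := by
    rw [Finset.sum_sub_distrib]
    have h1 : ∑ w : 𝒴 × 𝒵, qd p f w.1 * qd p g w.2
        = (∑ y : 𝒴, qd p f y) * (∑ z : 𝒵, qd p g z) := by
      rw [Finset.sum_mul_sum, Fintype.sum_prod_type]
    rw [h1, sum_qd, sum_qd, sum_qd, hs]
    simp
  have expand : ∀ w : 𝒴 × 𝒵,
      a w * (Real.log (qd p f w.1) + Real.log (qd p g w.2) - Real.log (a w))
      = Real.negMulLog (a w) - (-(a w) * Real.log (qd p f w.1))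
        - (-(a w) * Real.log (qd p g w.2)) := by
    intro w
    rw [Real.negMulLog]
    ring
  have key2 : ∑ w : 𝒴 × 𝒵, Real.negMulLog (a w)
      - ∑ w : 𝒴 × 𝒵, (-(a w) * Real.log (qd p f w.1))
      - ∑ w : 𝒴 × 𝒵, (-(a w) * Real.log (qd p g w.2)) ≤ 0 := by
    rw [← Finset.sum_sub_distrib, ← Finset.sum_sub_distrib]
    calc _ = ∑ w : 𝒴 × 𝒵, a w * (Real.log (qd p f w.1) + Real.log (qd p g w.2) - Real.log (a w)) :=
          Finset.sum_congr rfl fun w _ => (expand w).symm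
      _ ≤ 0 := le_of_le_of_eq key hrhs
  have : HN p (fun x => (f x, g x)) = ∑ w : 𝒴 × 𝒵, Real.negMulLog (a w) := rfl
  linarith [key2, hHf, hHg, this]

lemma HN_const (hs : ∑ x : 𝒳, p x = 1) (c : 𝒴) : HN p (fun _ : 𝒳 => c) = 0 := by
  classical
  unfold HN
  refine Finset.sum_eq_zero fun y _ => ?_
  have : qd p (fun _ : 𝒳 => c) y = if c = y then 1 else 0 := by
    unfold qd
    split_ifs with h
    · simpa [h] using hs
    · exact Finset.sum_eq_zero fun x _ => by simp [h]
  rw [this]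
  split_ifs <;> simp

lemma HN_pair_id (f : 𝒳 → 𝒴) :
    HN p (fun x => (f x, x)) = HN p (fun x => x) := by
  classical
  have hq : ∀ w : 𝒴 × 𝒳, qd p (fun x => (f x, x)) w = if f w.2 = w.1 then p w.2 else 0 := by
    intro w
    unfold qd
    rw [Finset.sum_eq_single w.2]
    · rcases eq_or_ne (f w.2) w.1 with h | h
      · simp [Prod.ext_iff, h]
      · simp [Prod.ext_iff, h]
    · intro x _ hx
      simp [Prod.ext_iff, hx]
    · simp
  have hid : ∀ x' : 𝒳, qd p (fun x => x) x' = p x' := by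
    intro x'
    unfold qd
    simp
  unfold HN
  rw [Finset.sum_congr rfl fun w _ => by
    rw [hq w, apply_ite Real.negMulLog, Real.negMulLog_zero]]
  rw [Fintype.sum_prod_type, Finset.sum_comm]
  refine Finset.sum_congr rfl fun x' _ => ?_
  rw [hid x']
  simp


lemma HN_pi_le {ι : Type*} [Fintype ι] [DecidableEq ι] {β : ι → Type*} [∀ i, Fintype (β i)]
    (hp : ∀ x, 0 ≤ p x) (hs : ∑ x : 𝒳, p x = 1)
    (f : (i : ι) → 𝒳 → β i) :
    HN p (fun x => (fun i : ι => f i x)) ≤ ∑ i : ι, HN p (f i) := by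
  classical
  have key : ∀ s : Finset ι,
      HN p (fun x => (fun i : ↥s => f i.1 x)) ≤ ∑ i ∈ s, HN p (f i) := by
    intro s
    induction s using Finset.induction_on with
    | empty =>
      have hconst : (fun x : 𝒳 => (fun i : ↥(∅ : Finset ι) => f i.1 x))
          = fun _ : 𝒳 => (fun i : ↥(∅ : Finset ι) => absurd i.2 (Finset.notMem_empty i.1)) := by
        funext x i
        exact absurd i.2 (Finset.notMem_empty i.1)
      rw [hconst, HN_const hs]
      simp
    | @insert a t hat ih =>
      -- reconstruct the tuple over `insert a t` from the pair (value at a, tuple over t)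
      set h : β a × ((i : ↥t) → β i.1) → ((i : ↥(insert a t : Finset ι)) → β i.1) :=
        fun w i => if hi : i.1 ∈ t then w.2 ⟨i.1, hi⟩
          else cast (congrArg β ((Finset.mem_insert.1 i.2).resolve_right hi)).symm w.1 with hdef
      have hfact : (fun x : 𝒳 => (fun i : ↥(insert a t : Finset ι) => f i.1 x))
          = fun x => h ((fun x => (f a x, fun i : ↥t => f i.1 x)) x) := by
        funext x i
        obtain ⟨iv, him⟩ := i
        by_cases hi : iv ∈ t
        · simp [hdef, hi]
        · have hia : iv = a := (Finset.mem_insert.1 him).resolve_right hi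
          subst hia
          simp [hdef, hi]
      rw [hfact]
      calc HN p (fun x => h ((fun x => (f a x, fun i : ↥t => f i.1 x)) x))
          ≤ HN p (fun x => (f a x, fun i : ↥t => f i.1 x)) := HN_comp_le hp _ h
        _ ≤ HN p (f a) + HN p (fun x => fun i : ↥t => f i.1 x) := HN_pair_le hp hs _ _
        _ ≤ HN p (f a) + ∑ i ∈ t, HN p (f i) := by linarith [ih]
        _ = ∑ i ∈ insert a t, HN p (f i) := by rw [Finset.sum_insert hat]
  exact le_trans
    (HN_comp_le hp (fun x => (fun i : ↥(Finset.univ : Finset ι) => f i.1 x))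
      (fun t (i : ι) => t ⟨i, Finset.mem_univ i⟩))
    (key Finset.univ)

end Dist

section Bridge
variable {Ω : Type*} [MeasurableSpace Ω] (μ : Measure Ω) [IsProbabilityMeasure μ]
  {𝒳 : Type*} [Fintype 𝒳] [MeasurableSpace 𝒳] [MeasurableSingletonClass 𝒳]

lemma qd_eq_measure (X : Ω → 𝒳) (hX : Measurable X) {𝒴 : Type*} (f : 𝒳 → 𝒴) (y : 𝒴) :
    qd (fun x => (μ (X ⁻¹' {x})).toReal) f y = (μ ((fun ω => f (X ω)) ⁻¹' {y})).toReal := by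
  classical
  have hpre : (fun ω => f (X ω)) ⁻¹' {y}
      = X ⁻¹' (↑(Finset.univ.filter fun x => f x = y) : Set 𝒳) := by
    ext ω; simp
  rw [hpre, ← sum_measure_preimage_singleton _ (fun x _ => hX (measurableSet_singleton x)),
    ENNReal.toReal_sum (fun x _ => measure_ne_top μ _), Finset.sum_filter]
  simp [qd]

lemma sum_p_one (X : Ω → 𝒳) (hX : Measurable X) :
    ∑ x : 𝒳, (μ (X ⁻¹' {x})).toReal = 1 := by
  rw [← ENNReal.toReal_sum (fun x _ => measure_ne_top μ _),
    sum_measure_preimage_singleton _ (fun x _ => hX (measurableSet_singleton x))]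
  simp

lemma entropy_eq (X : Ω → 𝒳) (hX : Measurable X) {𝒴 : Type*} [Fintype 𝒴] (f : 𝒳 → 𝒴) :
    entropy μ (fun ω => f (X ω)) = HN (fun x => (μ (X ⁻¹' {x})).toReal) f / Real.log 2 := by
  unfold entropy HN
  rw [Finset.sum_div, ← Finset.sum_neg_distrib]
  refine Finset.sum_congr rfl fun y _ => ?_
  rw [qd_eq_measure μ X hX f y, Real.negMulLog, Real.logb]
  ring

lemma mutualInfo_eq (X : Ω → 𝒳) (hX : Measurable X) {𝒴 : Type*} [Fintype 𝒴] (f : 𝒳 → 𝒴) :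
    mutualInfo μ (fun ω => f (X ω)) X
      = HN (fun x => (μ (X ⁻¹' {x})).toReal) f / Real.log 2 := by
  unfold mutualInfo
  rw [entropy_eq μ X hX f,
    show entropy μ X = entropy μ (fun ω => (fun x : 𝒳 => x) (X ω)) from rfl,
    entropy_eq μ X hX (fun x : 𝒳 => x),
    show entropy μ (fun ω => (f (X ω), X ω))
      = entropy μ (fun ω => (fun x : 𝒳 => (f x, x)) (X ω)) from rfl,
    entropy_eq μ X hX (fun x : 𝒳 => (f x, x)), HN_pair_id]
  ring

end Bridge

/-- For an MoE MLP `F(x) = g(ζ(x), (φ_i(x))_{i ∈ S_{ζ(x)}})` with `M` experts,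
`I(F(X); X) ≤ I(Z; X) + ∑_{z=1}^M I((φ_i(X))_{i ∈ S_z}; X)` where `Z = ζ(X)`. -/
theorem moe_mutualInfo_le_expert_decomposition
    {Ω : Type*} [MeasurableSpace Ω] (μ : Measure Ω) [IsProbabilityMeasure μ]
    {𝒳 : Type*} [Fintype 𝒳] [MeasurableSpace 𝒳] [MeasurableSingletonClass 𝒳]
    {𝒜 𝒴 : Type*} [Fintype 𝒜] [Fintype 𝒴]
    {M d : ℕ}
    (ζ : 𝒳 → Fin M) (S : Fin M → Finset (Fin d)) (φ : Fin d → 𝒳 → 𝒜)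
    (g : (z : Fin M) → (↥(S z) → 𝒜) → 𝒴)
    (F : 𝒳 → 𝒴) (X : Ω → 𝒳) (hX : Measurable X)
    (hF : ∀ x : 𝒳, F x = g (ζ x) (fun i : ↥(S (ζ x)) => φ i.1 x)) :
    mutualInfo μ (fun ω => F (X ω)) X ≤
      mutualInfo μ (fun ω => ζ (X ω)) X +
        ∑ z : Fin M,
          mutualInfo μ (fun ω => (fun i : ↥(S z) => φ i.1 (X ω))) X := by
  classical
  set p : 𝒳 → ℝ := fun x => (μ (X ⁻¹' {x})).toReal with hpdef
  have hp : ∀ x, 0 ≤ p x := fun x => ENNReal.toReal_nonneg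
  have hs : ∑ x : 𝒳, p x = 1 := sum_p_one μ X hX
  have hL : 0 < Real.log 2 := Real.log_pos (by norm_num)
  rw [mutualInfo_eq μ X hX F, mutualInfo_eq μ X hX ζ,
    Finset.sum_congr rfl fun z (_ : z ∈ Finset.univ) =>
      mutualInfo_eq μ X hX (fun x => (fun i : ↥(S z) => φ i.1 x)),
    ← Finset.sum_div, ← add_div]
  have core : HN p F ≤ HN p ζ + ∑ z : Fin M, HN p (fun x => (fun i : ↥(S z) => φ i.1 x)) := by
    have hF' : F = fun x =>
        (fun w : (Fin M) × ((z : Fin M) → (↥(S z) → 𝒜)) => g w.1 (w.2 w.1))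
          ((fun x => (ζ x, fun z (i : ↥(S z)) => φ i.1 x)) x) := by
      funext x
      exact hF x
    calc HN p F
        ≤ HN p (fun x => (ζ x, fun z (i : ↥(S z)) => φ i.1 x)) := by
          rw [hF']
          exact HN_comp_le hp (fun x => (ζ x, fun z (i : ↥(S z)) => φ i.1 x))
            (fun w : (Fin M) × ((z : Fin M) → (↥(S z) → 𝒜)) => g w.1 (w.2 w.1))
      _ ≤ HN p ζ + HN p (fun x => fun z (i : ↥(S z)) => φ i.1 x) :=
          HN_pair_le hp hs ζ _
      _ ≤ HN p ζ + ∑ z : Fin M, HN p (fun x => (fun i : ↥(S z) => φ i.1 x)) := by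
          have := HN_pi_le (p := p) hp hs (fun z x (i : ↥(S z)) => φ i.1 x)
          exact add_le_add_right this _
  gcongr
end

section
/- Let X be a random variable on a probability space taking values in a finite set 𝒳. Let F be an MoE MLP with M experts, i.e. F(x) = g(ζ(x), (φ_i(x))_{i∈S_{ζ(x)}}) for all x ∈ 𝒳, where ζ : 𝒳 → {1,…,M}, each S_z ⊆ {1,…,d}, each φ_i : 𝒳 → 𝒜 takes values in a finite set 𝒜, and g is an arbitrary function. If H(φ_i(X)) ≤ b for every neuron index i ∈ {1,…,d}, then the mutual information between the MoE MLP output and the input satisfies I(F(X); X) ≤ log₂ M + Σ_{z=1}^{M} |S_z| · b. -/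
open MeasureTheory

section Aux

open Finset Real

variable {Ω : Type*} [MeasurableSpace Ω] {μ : Measure Ω} [IsProbabilityMeasure μ]
variable {𝒳 : Type*} [Fintype 𝒳] [MeasurableSpace 𝒳] [MeasurableSingletonClass 𝒳]
variable {X : Ω → 𝒳}

/-- Probability mass of a value. -/
noncomputable def pmAux (μ : Measure Ω) {κ : Type*} (Y : Ω → κ) (k : κ) : ℝ :=
  (μ (Y ⁻¹' {k})).toReal

lemma pmAux_nonneg {κ : Type*} (Y : Ω → κ) (k : κ) : 0 ≤ pmAux μ Y k :=
  ENNReal.toReal_nonneg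

lemma entropy_eq_pmAux {κ : Type*} [Fintype κ] (Y : Ω → κ) :
    entropy μ Y = -∑ k : κ, pmAux μ Y k * Real.logb 2 (pmAux μ Y k) := rfl

lemma pmAux_mono {κ ι : Type*} (Y : Ω → κ) (Z : Ω → ι) {k : κ} {l : ι}
    (h : Y ⁻¹' {k} ⊆ Z ⁻¹' {l}) : pmAux μ Y k ≤ pmAux μ Z l := by
  exact ENNReal.toReal_mono (measure_ne_top μ _) (measure_mono h)

lemma measurableSet_fin {s : Set 𝒳} : MeasurableSet s :=
  s.toFinite.measurableSet

/-- probability of the cell of `x` under the partition induced by `f`. -/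
noncomputable def qcAux (μ : Measure Ω) (X : Ω → 𝒳) {κ : Type*} (f : 𝒳 → κ) (x : 𝒳) : ℝ :=
  pmAux μ (fun ω => f (X ω)) (f x)

lemma pmAux_le_qcAux {κ : Type*} (f : 𝒳 → κ) (x : 𝒳) :
    pmAux μ X x ≤ qcAux μ X f x := by
  apply pmAux_mono
  intro ω hω
  simp only [Set.mem_preimage, Set.mem_singleton_iff] at *
  rw [hω]

lemma qcAux_le_qcAux {κ ι : Type*} (f : 𝒳 → κ) (h : κ → ι) (x : 𝒳) :
    qcAux μ X f x ≤ qcAux μ X (fun y => h (f y)) x := by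
  apply pmAux_mono
  intro ω hω
  simp only [Set.mem_preimage, Set.mem_singleton_iff] at *
  rw [hω]

lemma pmAux_comp_eq_sum (hX : Measurable X) {κ : Type*} [DecidableEq κ] (f : 𝒳 → κ) (k : κ) :
    pmAux μ (fun ω => f (X ω)) k = ∑ x ∈ univ.filter (fun x => f x = k), pmAux μ X x := by
  have hmeas : ∀ y ∈ univ.filter (fun x => f x = k), MeasurableSet (X ⁻¹' {y}) :=
    fun y _ => hX measurableSet_fin
  have hsum := MeasureTheory.sum_measure_preimage_singleton (μ := μ)
    (univ.filter (fun x => f x = k)) hmeas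
  have hset : X ⁻¹' ↑(univ.filter (fun x => f x = k)) = (fun ω => f (X ω)) ⁻¹' {k} := by
    ext ω; simp
  rw [hset] at hsum
  rw [pmAux, ← hsum, ENNReal.toReal_sum (fun a _ => measure_ne_top μ _)]
  rfl

lemma sum_pmAux_comp (hX : Measurable X) {κ : Type*} [Fintype κ] (f : 𝒳 → κ) :
    ∑ k : κ, pmAux μ (fun ω => f (X ω)) k = 1 := by
  have hmeas : ∀ y ∈ (univ : Finset κ), MeasurableSet ((fun ω => f (X ω)) ⁻¹' {y}) := by
    intro y _
    exact hX (measurableSet_fin (s := f ⁻¹' {y}))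
  have hsum := MeasureTheory.sum_measure_preimage_singleton (μ := μ) (univ : Finset κ) hmeas
  have hset : (fun ω => f (X ω)) ⁻¹' ↑(univ : Finset κ) = Set.univ := by
    ext ω; simp
  rw [hset] at hsum
  have : ∑ k : κ, pmAux μ (fun ω => f (X ω)) k
      = (∑ k : κ, μ ((fun ω => f (X ω)) ⁻¹' {k})).toReal := by
    rw [ENNReal.toReal_sum (fun a _ => measure_ne_top μ _)]; rfl
  rw [this, hsum, measure_univ, ENNReal.toReal_one]

lemma sum_pmAux (hX : Measurable X) : ∑ x : 𝒳, pmAux μ X x = 1 := by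
  simpa using sum_pmAux_comp (μ := μ) hX (id : 𝒳 → 𝒳)

lemma entropy_comp_eq (hX : Measurable X) {κ : Type*} [Fintype κ] (f : 𝒳 → κ) :
    entropy μ (fun ω => f (X ω)) = -∑ x : 𝒳, pmAux μ X x * Real.logb 2 (qcAux μ X f x) := by
  classical
  rw [entropy_eq_pmAux]
  congr 1
  rw [← Finset.sum_fiberwise (univ : Finset 𝒳) f
    (fun x => pmAux μ X x * Real.logb 2 (qcAux μ X f x))]
  apply Finset.sum_congr rfl
  intro k _
  have : ∀ x ∈ univ.filter (fun x => f x = k),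
      pmAux μ X x * Real.logb 2 (qcAux μ X f x)
        = pmAux μ X x * Real.logb 2 (pmAux μ (fun ω => f (X ω)) k) := by
    intro x hx
    have hfx : f x = k := (Finset.mem_filter.mp hx).2
    rw [qcAux, hfx]
  rw [Finset.sum_congr rfl this, ← Finset.sum_mul]
  congr 1
  exact pmAux_comp_eq_sum hX f k

/-- Entropy can only decrease under post-composition (data processing). -/
lemma entropy_comp_comp_le (hX : Measurable X) {κ ι : Type*} [Fintype κ] [Fintype ι]
    (f : 𝒳 → κ) (h : κ → ι) :
    entropy μ (fun ω => h (f (X ω))) ≤ entropy μ (fun ω => f (X ω)) := by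
  rw [entropy_comp_eq hX f, entropy_comp_eq hX (fun x => h (f x))]
  rw [neg_le_neg_iff]
  apply Finset.sum_le_sum
  intro x _
  rcases eq_or_lt_of_le (pmAux_nonneg (μ := μ) X x) with h0 | h0
  · rw [← h0]; simp
  · have h1 : 0 < qcAux μ X f x := lt_of_lt_of_le h0 (pmAux_le_qcAux f x)
    have h2 : qcAux μ X f x ≤ qcAux μ X (fun y => h (f y)) x := qcAux_le_qcAux f h x
    exact mul_le_mul_of_nonneg_left
      (Real.logb_le_logb_of_le one_lt_two h1 h2) (le_of_lt h0)

/-- Entropy of a random variable valued in a subsingleton type is zero. -/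
lemma entropy_subsingleton {κ : Type*} [Fintype κ] [Subsingleton κ] (Y : Ω → κ) :
    entropy μ Y = 0 := by
  rw [entropy_eq_pmAux, neg_eq_zero]
  apply Finset.sum_eq_zero
  intro k _
  have : Y ⁻¹' {k} = Set.univ := by
    ext ω; simp [Subsingleton.elim (Y ω) k]
  rw [pmAux, this, measure_univ, ENNReal.toReal_one, Real.logb_one, mul_zero]

/-- `H(Y) ≤ log₂ |κ|` for any distribution. -/
lemma neg_sum_mul_logb_le_logb_card {κ : Type*} [Fintype κ] [Nonempty κ] (Q : κ → ℝ)
    (h0 : ∀ k, 0 ≤ Q k) (h1 : ∑ k, Q k = 1) :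
    -∑ k : κ, Q k * Real.logb 2 (Q k) ≤ Real.logb 2 (Fintype.card κ) := by
  set n : ℝ := (Fintype.card κ : ℝ) with hn
  have hnpos : 0 < n := by
    simp only [hn]
    exact_mod_cast Fintype.card_pos
  -- termwise bound in natural log
  have key : ∀ k : κ, -(Q k * Real.log (Q k)) ≤ 1 / n - Q k + Q k * Real.log n := by
    intro k
    rcases eq_or_lt_of_le (h0 k) with hq | hq
    · rw [← hq]
      have h1n : 0 ≤ 1 / n := by positivity
      simpa using h1n
    · have hnq : 0 < n * Q k := mul_pos hnpos hq
      have hlog : Real.log ((n * Q k)⁻¹) ≤ (n * Q k)⁻¹ - 1 :=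
        Real.log_le_sub_one_of_pos (by positivity)
      rw [Real.log_inv] at hlog
      have hmul : Real.log (n * Q k) = Real.log n + Real.log (Q k) :=
        Real.log_mul (ne_of_gt hnpos) (ne_of_gt hq)
      have h2 : Q k * (-(Real.log n + Real.log (Q k))) ≤ Q k * ((n * Q k)⁻¹ - 1) := by
        rw [← hmul]
        exact mul_le_mul_of_nonneg_left hlog (le_of_lt hq)
      have h4 : Q k * ((n * Q k)⁻¹ - 1) = 1 / n - Q k := by
        rw [mul_sub, mul_one, mul_inv_rev, ← mul_assoc, mul_inv_cancel₀ (ne_of_gt hq),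
          one_mul, one_div]
      rw [h4] at h2
      nlinarith [h2]
  have hln : -∑ k : κ, Q k * Real.log (Q k) ≤ Real.log n := by
    have hrhs : ∑ k : κ, (1 / n - Q k + Q k * Real.log n) = Real.log n := by
      rw [Finset.sum_add_distrib, Finset.sum_sub_distrib, ← Finset.sum_mul, h1]
      simp only [Finset.sum_const, Finset.card_univ, nsmul_eq_mul, one_mul]
      have : (Fintype.card κ : ℝ) * (1 / n) = 1 := by
        rw [← hn]; field_simp
      rw [this]; ring
    calc -∑ k : κ, Q k * Real.log (Q k) = ∑ k : κ, -(Q k * Real.log (Q k)) := by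
          rw [Finset.sum_neg_distrib]
      _ ≤ ∑ k : κ, (1 / n - Q k + Q k * Real.log n) :=
          Finset.sum_le_sum (fun k _ => key k)
      _ = Real.log n := hrhs
  -- convert to base 2
  have hlog2 : 0 < Real.log 2 := Real.log_pos one_lt_two
  have hLHS : ∑ k : κ, Q k * Real.logb 2 (Q k)
      = (∑ k : κ, Q k * Real.log (Q k)) / Real.log 2 := by
    rw [Finset.sum_div]
    apply Finset.sum_congr rfl
    intro k _
    rw [Real.logb, mul_div_assoc]
  rw [hLHS, Real.logb, ← neg_div]
  exact div_le_div_of_nonneg_right hln (le_of_lt hlog2)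

lemma entropy_comp_le_logb_card (hX : Measurable X) {κ : Type*} [Fintype κ] [Nonempty κ]
    (f : 𝒳 → κ) :
    entropy μ (fun ω => f (X ω)) ≤ Real.logb 2 (Fintype.card κ) := by
  rw [entropy_eq_pmAux]
  exact neg_sum_mul_logb_le_logb_card _ (fun k => pmAux_nonneg _ k) (sum_pmAux_comp hX f)

/-- Subadditivity of entropy for a pair. -/
lemma entropy_pair_le (hX : Measurable X) {κ ι : Type*} [Fintype κ] [Fintype ι]
    (f : 𝒳 → κ) (g : 𝒳 → ι) :
    entropy μ (fun ω => (f (X ω), g (X ω))) ≤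
      entropy μ (fun ω => f (X ω)) + entropy μ (fun ω => g (X ω)) := by
  classical
  rw [entropy_comp_eq hX f, entropy_comp_eq hX g, entropy_comp_eq hX (fun x => (f x, g x))]
  set p : 𝒳 → ℝ := pmAux μ X with hp
  set a : 𝒳 → ℝ := qcAux μ X f with ha
  set c : 𝒳 → ℝ := qcAux μ X g with hc
  set r : 𝒳 → ℝ := qcAux μ X (fun x => (f x, g x)) with hr
  have hpr : ∀ x, p x ≤ r x := fun x => pmAux_le_qcAux _ x
  have hra : ∀ x, r x ≤ a x := fun x => qcAux_le_qcAux (fun x => (f x, g x)) Prod.fst x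
  have hrc : ∀ x, r x ≤ c x := fun x => qcAux_le_qcAux (fun x => (f x, g x)) Prod.snd x
  have hp0 : ∀ x, 0 ≤ p x := fun x => pmAux_nonneg _ x
  -- key inequality in natural log
  have hterm : ∀ x : 𝒳, p x * (Real.log (a x) + Real.log (c x) - Real.log (r x))
      ≤ p x * (a x * c x / r x) - p x := by
    intro x
    rcases eq_or_lt_of_le (hp0 x) with h0 | h0
    · rw [← h0]; simp
    · have hr0 : 0 < r x := lt_of_lt_of_le h0 (hpr x)
      have ha0 : 0 < a x := lt_of_lt_of_le hr0 (hra x)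
      have hc0 : 0 < c x := lt_of_lt_of_le hr0 (hrc x)
      have hfrac : 0 < a x * c x / r x := by positivity
      have hlog : Real.log (a x * c x / r x) ≤ a x * c x / r x - 1 :=
        Real.log_le_sub_one_of_pos hfrac
      have hsplit : Real.log (a x * c x / r x)
          = Real.log (a x) + Real.log (c x) - Real.log (r x) := by
        rw [Real.log_div (by positivity) (ne_of_gt hr0),
          Real.log_mul (ne_of_gt ha0) (ne_of_gt hc0)]
      rw [hsplit] at hlog
      have := mul_le_mul_of_nonneg_left hlog (le_of_lt h0)
      nlinarith [this]
  -- sum of p x * (a c / r) is at most 1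
  have hQsum : ∑ x : 𝒳, p x * (a x * c x / r x) ≤ 1 := by
    set A : κ → ℝ := pmAux μ (fun ω => f (X ω)) with hA
    set C : ι → ℝ := pmAux μ (fun ω => g (X ω)) with hC
    set R : κ × ι → ℝ := pmAux μ (fun ω => (f (X ω), g (X ω))) with hR
    have hgroup : ∑ x : 𝒳, p x * (a x * c x / r x)
        = ∑ k : κ × ι, ∑ x ∈ univ.filter (fun x => (f x, g x) = k),
            p x * (a x * c x / r x) := by
      rw [Finset.sum_fiberwise (univ : Finset 𝒳) (fun x => (f x, g x))]
    rw [hgroup]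
    have hinner : ∀ k : κ × ι, ∑ x ∈ univ.filter (fun x => (f x, g x) = k),
        p x * (a x * c x / r x) ≤ A k.1 * C k.2 := by
      intro k
      have heq : ∀ x ∈ univ.filter (fun x => (f x, g x) = k),
          p x * (a x * c x / r x) = p x * (A k.1 * C k.2 / R k) := by
        intro x hx
        have hfx : (f x, g x) = k := (Finset.mem_filter.mp hx).2
        have h1 : a x = A k.1 := by
          rw [ha, qcAux, hA, ← hfx]
        have h2 : c x = C k.2 := by
          rw [hc, qcAux, hC, ← hfx]
        have h3 : r x = R k := by
          rw [hr, qcAux, hR, ← hfx]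
        rw [h1, h2, h3]
      rw [Finset.sum_congr rfl heq, ← Finset.sum_mul]
      have hsum : ∑ x ∈ univ.filter (fun x => (f x, g x) = k), p x = R k :=
        (pmAux_comp_eq_sum hX (fun x => (f x, g x)) k).symm
      rw [hsum]
      rcases eq_or_lt_of_le (show (0 : ℝ) ≤ R k from pmAux_nonneg _ k) with h0 | h0
      · rw [← h0, zero_mul]
        exact mul_nonneg (pmAux_nonneg _ _) (pmAux_nonneg _ _)
      · rw [mul_comm, div_mul_cancel₀ _ (ne_of_gt h0)]
    calc ∑ k : κ × ι, ∑ x ∈ univ.filter (fun x => (f x, g x) = k), p x * (a x * c x / r x)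
        ≤ ∑ k : κ × ι, A k.1 * C k.2 := Finset.sum_le_sum (fun k _ => hinner k)
      _ = (∑ k : κ, A k) * (∑ l : ι, C l) := by
          rw [Finset.sum_mul_sum, ← Finset.univ_product_univ, Finset.sum_product]
      _ = 1 := by rw [sum_pmAux_comp hX f, sum_pmAux_comp hX g, one_mul]
  have hsump : ∑ x : 𝒳, p x = 1 := sum_pmAux hX
  have hT : ∑ x : 𝒳, p x * (Real.log (a x) + Real.log (c x) - Real.log (r x)) ≤ 0 := by
    calc ∑ x : 𝒳, p x * (Real.log (a x) + Real.log (c x) - Real.log (r x))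
        ≤ ∑ x : 𝒳, (p x * (a x * c x / r x) - p x) := Finset.sum_le_sum (fun x _ => hterm x)
      _ = (∑ x : 𝒳, p x * (a x * c x / r x)) - 1 := by
          rw [Finset.sum_sub_distrib, hsump]
      _ ≤ 0 := by linarith
  -- conclude in base 2
  have hlog2 : 0 < Real.log 2 := Real.log_pos one_lt_two
  have hsplit : ∑ x : 𝒳, p x * Real.logb 2 (a x) + ∑ x : 𝒳, p x * Real.logb 2 (c x)
      - ∑ x : 𝒳, p x * Real.logb 2 (r x)
      = (∑ x : 𝒳, p x * (Real.log (a x) + Real.log (c x) - Real.log (r x))) / Real.log 2 := by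
    rw [Finset.sum_div, ← Finset.sum_add_distrib, ← Finset.sum_sub_distrib]
    apply Finset.sum_congr rfl
    intro x _
    simp only [Real.logb]
    have h2 : Real.log 2 ≠ 0 := ne_of_gt hlog2
    field_simp
  have hfinal : (∑ x : 𝒳, p x * (Real.log (a x) + Real.log (c x) - Real.log (r x)))
      / Real.log 2 ≤ 0 := div_nonpos_of_nonpos_of_nonneg hT (le_of_lt hlog2)
  linarith [hsplit, hfinal]

/-- Subadditivity of entropy for finite tuples. -/
lemma entropy_pi_le (hX : Measurable X) {ι 𝒜 : Type*} [DecidableEq ι] [Fintype 𝒜]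
    (V : ι → 𝒳 → 𝒜) (s : Finset ι) :
    entropy μ (fun ω => (fun i : ↥s => V i (X ω))) ≤
      ∑ i ∈ s, entropy μ (fun ω => V i (X ω)) := by
  classical
  induction s using Finset.cons_induction with
  | empty =>
    rw [Finset.sum_empty]
    have : entropy μ (fun ω => (fun i : ↥(∅ : Finset ι) => V i (X ω))) = 0 :=
      entropy_subsingleton _
    rw [this]
  | cons a s ha IH =>
    rw [Finset.sum_cons]
    set h : 𝒜 × (↥s → 𝒜) → (↥(Finset.cons a s ha) → 𝒜) := fun q =>
      fun i => if hi : (i : ι) = a then q.1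
        else q.2 ⟨(i : ι), (Finset.mem_cons.mp i.2).resolve_left hi⟩ with hhdef
    have heq : (fun ω => (fun i : ↥(Finset.cons a s ha) => V i (X ω)))
        = fun ω => h ((fun x => (V a x, fun i : ↥s => V i x)) (X ω)) := by
      funext ω
      funext i
      simp only [hhdef]
      split_ifs with hi
      · rw [hi]
      · rfl
    rw [heq]
    calc entropy μ (fun ω => h ((fun x => (V a x, fun i : ↥s => V i x)) (X ω)))
        ≤ entropy μ (fun ω => (V a (X ω), fun i : ↥s => V i (X ω))) :=
          entropy_comp_comp_le hX (fun x => (V a x, fun i : ↥s => V i x)) h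
      _ ≤ entropy μ (fun ω => V a (X ω)) + entropy μ (fun ω => (fun i : ↥s => V i (X ω))) :=
          entropy_pair_le hX (fun x => V a x) (fun x => (fun i : ↥s => V i x))
      _ ≤ entropy μ (fun ω => V a (X ω)) + ∑ i ∈ s, entropy μ (fun ω => V i (X ω)) := by
          linarith [IH]

end Aux

/-- For an MoE MLP `F(x) = g(ζ(x), (φ_i(x))_{i ∈ S_{ζ(x)}})` with `M` experts, if each
neuron activation has entropy at most `b` bits, then
`I(F(X); X) ≤ log₂ M + ∑_{z=1}^M |S_z| · b`. -/
theorem moe_mutualInfo_le_bits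
    {Ω : Type*} [MeasurableSpace Ω] (μ : Measure Ω) [IsProbabilityMeasure μ]
    {𝒳 : Type*} [Fintype 𝒳] [MeasurableSpace 𝒳] [MeasurableSingletonClass 𝒳]
    {𝒜 𝒴 : Type*} [Fintype 𝒜] [Fintype 𝒴]
    {M d : ℕ}
    (ζ : 𝒳 → Fin M) (S : Fin M → Finset (Fin d)) (φ : Fin d → 𝒳 → 𝒜)
    (g : (z : Fin M) → (↥(S z) → 𝒜) → 𝒴)
    (F : 𝒳 → 𝒴) (X : Ω → 𝒳) (hX : Measurable X)
    (hF : ∀ x : 𝒳, F x = g (ζ x) (fun i : ↥(S (ζ x)) => φ i.1 x))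
    (b : ℝ) (hb : ∀ i : Fin d, entropy μ (fun ω => φ i (X ω)) ≤ b) :
    mutualInfo μ (fun ω => F (X ω)) X ≤
      Real.logb 2 M + ∑ z : Fin M, ((S z).card : ℝ) * b := by
  classical
  -- basic nonemptiness facts
  have hΩ : Nonempty Ω := by
    by_contra h
    have h0 : μ Set.univ = 0 := by
      have huniv : (Set.univ : Set Ω) = ∅ := Set.univ_eq_empty_iff.mpr (not_nonempty_iff.mp h)
      rw [huniv, measure_empty]
    rw [measure_univ] at h0
    exact one_ne_zero h0
  have h𝒳 : Nonempty 𝒳 := ⟨X hΩ.some⟩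
  have hM : Nonempty (Fin M) := ⟨ζ h𝒳.some⟩
  -- mutual information equals entropy of F ∘ X (up to inequality)
  have hpair : entropy μ X ≤ entropy μ (fun ω => (F (X ω), X ω)) := by
    have := entropy_comp_comp_le (μ := μ) hX (fun x => (F x, x)) Prod.snd
    simpa using this
  have hmi : mutualInfo μ (fun ω => F (X ω)) X ≤ entropy μ (fun ω => F (X ω)) := by
    rw [mutualInfo]
    linarith [hpair]
  -- index type of all neurons
  set ι : Type _ := Σ z : Fin M, ↥(S z) with hι
  set V : ι → 𝒳 → 𝒜 := fun p x => φ p.2.1 x with hV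
  set w : 𝒳 → Fin M × (↥(Finset.univ : Finset ι) → 𝒜) :=
    fun x => (ζ x, fun p => V p.1 x) with hw
  set h : Fin M × (↥(Finset.univ : Finset ι) → 𝒜) → 𝒴 :=
    fun q => g q.1 (fun i : ↥(S q.1) => q.2 ⟨⟨q.1, i⟩, Finset.mem_univ _⟩) with hh
  have hFw : ∀ x : 𝒳, F x = h (w x) := by
    intro x
    rw [hF x]
  have hFeq : (fun ω => F (X ω)) = fun ω => h (w (X ω)) := by
    funext ω; rw [hFw]
  -- entropy chain
  have h1 : entropy μ (fun ω => F (X ω)) ≤ entropy μ (fun ω => w (X ω)) := by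
    rw [hFeq]
    exact entropy_comp_comp_le hX w h
  have h2 : entropy μ (fun ω => w (X ω)) ≤
      entropy μ (fun ω => ζ (X ω))
        + entropy μ (fun ω => (fun p : ↥(Finset.univ : Finset ι) => V p.1 (X ω))) :=
    entropy_pair_le hX ζ (fun x => (fun p : ↥(Finset.univ : Finset ι) => V p.1 x))
  have h3 : entropy μ (fun ω => ζ (X ω)) ≤ Real.logb 2 M := by
    have := entropy_comp_le_logb_card (μ := μ) hX ζ
    rwa [Fintype.card_fin] at this
  have h4 : entropy μ (fun ω => (fun p : ↥(Finset.univ : Finset ι) => V p.1 (X ω))) ≤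
      ∑ p ∈ (Finset.univ : Finset ι), entropy μ (fun ω => V p (X ω)) := by
    exact entropy_pi_le hX V Finset.univ
  have h5 : ∑ p ∈ (Finset.univ : Finset ι), entropy μ (fun ω => V p (X ω)) ≤
      ∑ z : Fin M, ((S z).card : ℝ) * b := by
    have hle : ∀ p ∈ (Finset.univ : Finset ι), entropy μ (fun ω => V p (X ω)) ≤ b := by
      intro p _
      exact hb p.2.1
    calc ∑ p ∈ (Finset.univ : Finset ι), entropy μ (fun ω => V p (X ω))
        ≤ ∑ _p ∈ (Finset.univ : Finset ι), b := Finset.sum_le_sum hle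
      _ = (Fintype.card ι : ℝ) * b := by
          rw [Finset.sum_const, Finset.card_univ, nsmul_eq_mul]
      _ = ∑ z : Fin M, ((S z).card : ℝ) * b := by
          rw [← Finset.sum_mul]
          congr 1
          show ((Fintype.card (Σ z : Fin M, ↥(S z)) : ℕ) : ℝ) = _
          rw [Fintype.card_sigma]
          push_cast
          exact Finset.sum_congr rfl (fun z _ => by rw [Fintype.card_coe])
  linarith [hmi, h1, h2, h3, h4, h5]
end
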